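/- The summable equivalence relation 𝔼₂ generically separates classes: for all x,y ∈ 2^ω with ¬(x 𝔼₂ y), the set {z ∈ 2^ω : ¬(x↾z 𝔼₂ y↾z)} is comeager in 2^ω, where (x↾z)(n) = min(x(n), z(n)). -/
import Mathlib


/-- The summable equivalence relation 𝔼₂ on 2^ω. -/
def Etwo (x y : ℕ → Bool) : Prop :=
  Summable (fun n => if x n ≠ y n then (1 : ℝ) / (n + 1) else 0)

/-- The pointwise minimum `x↾z`. -/
def rst (x z : ℕ → Bool) : ℕ → Bool :=
  fun n => x n && z n

/-- 𝔼₂ generically separates classes. -/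
theorem stmt19 (x y : ℕ → Bool) (h : ¬ Etwo x y) :
    {z : ℕ → Bool | ¬ Etwo (rst x z) (rst y z)} ∈ residual (ℕ → Bool) := by
  set f : ℕ → ℝ := fun n => if x n ≠ y n then (1 : ℝ) / (n + 1) else 0 with hf
  set g : (ℕ → Bool) → ℕ → ℝ :=
    fun z n => if x n ≠ y n ∧ z n = true then (1 : ℝ) / (n + 1) else 0 with hg
  have hg_nonneg : ∀ z n, 0 ≤ g z n := by
    intro z n; simp only [hg]; positivity
  have hf_nonneg : ∀ n, 0 ≤ f n := by
    intro n; simp only [hf]; positivity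
  have hkey : ∀ z, Etwo (rst x z) (rst y z) ↔ Summable (g z) := by
    intro z
    have heq : ∀ n, (if rst x z n ≠ rst y z n then (1 : ℝ) / (n + 1) else 0) = g z n := by
      intro n
      rcases Bool.eq_false_or_eq_true (x n) with hx | hx <;>
        rcases Bool.eq_false_or_eq_true (y n) with hy | hy <;>
          rcases Bool.eq_false_or_eq_true (z n) with hz | hz <;>
            simp [rst, hx, hy, hz, hg]
    unfold Etwo
    constructor <;> intro hs <;> refine hs.congr fun n => ?_
    · exact heq n
    · exact (heq n).symm
  have htail : ∀ (m : ℕ) (C : ℝ), ∃ N, C < ∑ i ∈ Finset.Ico m N, f i := by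
    intro m C
    have h1 : ¬ Summable (fun i => f (i + m)) := by
      rw [summable_nat_add_iff]; exact h
    have h2 := (not_summable_iff_tendsto_nat_atTop_of_nonneg (fun i => hf_nonneg _)).1 h1
    obtain ⟨N, hN⟩ := (h2.eventually_gt_atTop C).exists
    refine ⟨m + N, ?_⟩
    have heq : ∑ i ∈ Finset.Ico m (m + N), f i = ∑ i ∈ Finset.range N, f (i + m) := by
      rw [Finset.sum_Ico_eq_sum_range]
      simp [add_comm]
    rw [heq]; exact hN
  set U : ℕ → Set (ℕ → Bool) :=
    fun k => {z | ∃ N, (k : ℝ) < ∑ i ∈ Finset.range N, g z i} with hU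
  have hopen : ∀ k, IsOpen (U k) := by
    intro k
    have hrepr : U k = ⋃ N, (fun z => ∑ i ∈ Finset.range N, g z i) ⁻¹' Set.Ioi (k : ℝ) := by
      ext z; simp [hU]
    rw [hrepr]
    refine isOpen_iUnion fun N => IsOpen.preimage ?_ isOpen_Ioi
    refine continuous_finset_sum _ fun i _ => ?_
    have : (fun z : ℕ → Bool => g z i) =
        (fun b : Bool => if x i ≠ y i ∧ b = true then (1 : ℝ) / (i + 1) else 0) ∘
          (fun z => z i) := rfl
    rw [this]
    exact Continuous.comp continuous_of_discreteTopology (continuous_apply i)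
  have hdense : ∀ k, Dense (U k) := by
    intro k
    rw [dense_iff_inter_open]
    rintro V hV ⟨z, hz⟩
    obtain ⟨I, u, hu, hsub⟩ := isOpen_pi_iff.1 hV z hz
    set m : ℕ := I.sup id + 1 with hm
    set w : ℕ → Bool := fun i => if i ∈ I then z i else true with hw
    have hwV : w ∈ V := by
      apply hsub
      intro i hi
      simp only [hw, Finset.mem_coe.1 hi, if_pos]
      exact (hu i hi).2
    have hwt : ∀ i, m ≤ i → w i = true := by
      intro i hi
      have : i ∉ I := by
        intro hiI
        have : i ≤ I.sup id := Finset.le_sup (f := id) hiI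
        omega
      simp [hw, this]
    obtain ⟨N, hN⟩ := htail m (k : ℝ)
    refine ⟨w, hwV, N, lt_of_lt_of_le (b := ∑ i ∈ Finset.Ico m N, g w i) ?_ ?_⟩
    · calc (k : ℝ) < ∑ i ∈ Finset.Ico m N, f i := hN
        _ = ∑ i ∈ Finset.Ico m N, g w i := by
            refine Finset.sum_congr rfl fun i hi => ?_
            have := hwt i (Finset.mem_Ico.1 hi).1
            simp only [hf, hg, this, and_true]
    · refine Finset.sum_le_sum_of_subset_of_nonneg ?_ fun i _ _ => hg_nonneg w i
      intro i hi
      exact Finset.mem_range.2 (Finset.mem_Ico.1 hi).2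
  have hGδ : (⋂ k, U k) ∈ residual (ℕ → Bool) :=
    countable_iInter_mem.2 fun k => residual_of_dense_open (hopen k) (hdense k)
  refine Filter.mem_of_superset hGδ ?_
  intro z hz
  rw [Set.mem_setOf_eq, hkey]
  intro hs
  obtain ⟨N, hN⟩ := Set.mem_iInter.1 hz (Nat.ceil (∑' n, g z n))
  have h1 : ∑ i ∈ Finset.range N, g z i ≤ ∑' n, g z n :=
    Summable.sum_le_tsum _ (fun i _ => hg_nonneg z i) hs
  have h2 : (∑' n, g z n) ≤ (Nat.ceil (∑' n, g z n) : ℝ) := Nat.le_ceil _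
  linarith
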